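/- With the notation p_{s,D}(z) = E_{Y₁,…,Y_s}[T_{D_s}(z)·1{|D_s| ≤ D}] where D_s = Σ Y_i for iid uniform ±1 signs Y_i, for all positive integers s, D and all z ∈ [−1,1], |p_{s,D}(z) − z^s| ≤ 2·exp(−D²/(2s)). -/
import Mathlib


open Polynomial Finset

/-- The random walk position `D_s = ∑ Y_i` for a sign pattern `Y`. -/
noncomputable def walkSum (s : ℕ) (Y : Fin s → Bool) : ℤ :=
  ∑ i, (if Y i then (1 : ℤ) else -1)

lemma walkSum_cons (s : ℕ) (b : Bool) (Y : Fin s → Bool) :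
    walkSum (s+1) (Fin.cons b Y) = (if b then 1 else -1) + walkSum s Y := by
  simp [walkSum, Fin.sum_univ_succ]

lemma walk_rec (s : ℕ) (g : ℤ → ℝ) :
    ∑ Y : Fin (s+1) → Bool, g (walkSum (s+1) Y)
      = ∑ Y : Fin s → Bool, (g (walkSum s Y + 1) + g (walkSum s Y - 1)) := by
  rw [← (Fin.consEquiv fun _ : Fin (s+1) => Bool).sum_comp
    (fun Y => g (walkSum (s+1) Y)), Fintype.sum_prod_type]
  simp only [Fintype.sum_bool, ← Finset.sum_add_distrib]
  congr 1; funext Y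
  have h1 : ((Fin.consEquiv fun _ : Fin (s+1) => Bool) (true, Y)) = Fin.cons true Y := rfl
  have h2 : ((Fin.consEquiv fun _ : Fin (s+1) => Bool) (false, Y)) = Fin.cons false Y := rfl
  rw [h1, h2, walkSum_cons, walkSum_cons, if_pos rfl, if_neg (by simp)]
  rw [add_comm (1:ℤ), show (-1 : ℤ) + walkSum s Y = walkSum s Y - 1 by ring]

/-- Binomial/cosine identity: `∑_Y cos(W_Y θ) = (2 cos θ)^s`. -/
lemma walk_cos (s : ℕ) (θ : ℝ) :
    ∑ Y : Fin s → Bool, Real.cos (walkSum s Y * θ) = (2 * Real.cos θ) ^ s := by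
  induction s with
  | zero => simp [walkSum]
  | succ n ih =>
    rw [walk_rec n (fun k => Real.cos (k * θ))]
    have : ∀ w : ℤ, Real.cos ((w + 1 : ℤ) * θ) + Real.cos ((w - 1 : ℤ) * θ)
        = Real.cos (w * θ) * (2 * Real.cos θ) := by
      intro w
      push_cast
      rw [add_mul, sub_mul, one_mul, Real.cos_add, Real.cos_sub]
      ring
    simp only [this, ← Finset.sum_mul, ih, pow_succ]

/-- MGF identity: `∑_Y exp(t W_Y) = (2 cosh t)^s`. -/
lemma walk_exp (s : ℕ) (t : ℝ) :
    ∑ Y : Fin s → Bool, Real.exp (t * walkSum s Y) = (2 * Real.cosh t) ^ s := by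
  induction s with
  | zero => simp [walkSum]
  | succ n ih =>
    rw [walk_rec n (fun k => Real.exp (t * k))]
    have : ∀ w : ℤ, Real.exp (t * (w + 1 : ℤ)) + Real.exp (t * (w - 1 : ℤ))
        = Real.exp (t * w) * (2 * Real.cosh t) := by
      intro w
      push_cast
      rw [Real.cosh_eq, mul_add, mul_sub, mul_one, Real.exp_add, Real.exp_sub, Real.exp_neg]
      have h := Real.exp_ne_zero t
      field_simp
    simp only [this, ← Finset.sum_mul, ih, pow_succ]

/-- Chernoff bound on the number of walks reaching at least `c`. -/
lemma walk_count_ge (s : ℕ) (hs : 0 < s) (c : ℕ) :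
    ((Finset.univ.filter fun Y : Fin s → Bool => (c : ℤ) ≤ walkSum s Y).card : ℝ)
      ≤ 2 ^ s * Real.exp (-(c : ℝ) ^ 2 / (2 * s)) := by
  set t : ℝ := c / s with ht
  have ht0 : 0 ≤ t := by positivity
  have key : ((Finset.univ.filter fun Y : Fin s → Bool => (c : ℤ) ≤ walkSum s Y).card : ℝ)
      ≤ Real.exp (-(t * c)) * (2 * Real.cosh t) ^ s := by
    rw [← walk_exp]
    rw [Finset.mul_sum]
    calc ((Finset.univ.filter fun Y : Fin s → Bool => (c : ℤ) ≤ walkSum s Y).card : ℝ)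
        = ∑ Y ∈ Finset.univ.filter fun Y : Fin s → Bool => (c : ℤ) ≤ walkSum s Y, (1:ℝ) := by
          simp
      _ ≤ ∑ Y ∈ Finset.univ.filter fun Y : Fin s → Bool => (c : ℤ) ≤ walkSum s Y,
            Real.exp (-(t * c)) * Real.exp (t * walkSum s Y) := by
          refine Finset.sum_le_sum fun Y hY => ?_
          rw [Finset.mem_filter] at hY
          rw [← Real.exp_add]
          rw [show (1:ℝ) = Real.exp 0 by simp]
          apply Real.exp_le_exp.2
          have : (c : ℝ) ≤ (walkSum s Y : ℝ) := by exact_mod_cast hY.2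
          nlinarith
      _ ≤ ∑ Y : Fin s → Bool, Real.exp (-(t * c)) * Real.exp (t * walkSum s Y) := by
          refine Finset.sum_le_sum_of_subset_of_nonneg (Finset.filter_subset _ _) ?_
          intros; positivity
  refine key.trans ?_
  have hcosh : (2 * Real.cosh t) ^ s ≤ (2 * Real.exp (t ^ 2 / 2)) ^ s := by
    apply pow_le_pow_left₀ (by positivity)
    have := Real.cosh_le_exp_half_sq t
    linarith
  calc Real.exp (-(t * c)) * (2 * Real.cosh t) ^ s
      ≤ Real.exp (-(t * c)) * (2 * Real.exp (t ^ 2 / 2)) ^ s := by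
        apply mul_le_mul_of_nonneg_left hcosh (by positivity)
    _ = 2 ^ s * Real.exp (-(c : ℝ) ^ 2 / (2 * s)) := by
        have hs' : (s : ℝ) ≠ 0 := by positivity
        rw [mul_pow, ← Real.exp_nat_mul,
          show Real.exp (-(t * c)) * (2 ^ s * Real.exp (s * (t ^ 2 / 2)))
            = 2 ^ s * (Real.exp (-(t * c)) * Real.exp (s * (t ^ 2 / 2))) by ring,
          ← Real.exp_add]
        congr 1
        rw [ht]
        field_simp
        ring

lemma walkSum_neg (s : ℕ) (Y : Fin s → Bool) :
    walkSum s (fun i => !(Y i)) = -walkSum s Y := by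
  rw [walkSum, walkSum, ← Finset.sum_neg_distrib]
  refine Finset.sum_congr rfl fun i _ => ?_
  cases Y i <;> simp

lemma walk_count_neg (s : ℕ) (c : ℤ) :
    (Finset.univ.filter fun Y : Fin s → Bool => walkSum s Y ≤ -c).card
      = (Finset.univ.filter fun Y : Fin s → Bool => c ≤ walkSum s Y).card := by
  apply Finset.card_bij' (fun Y _ => fun i => !(Y i)) (fun Y _ => fun i => !(Y i))
  · intro Y hY
    rw [Finset.mem_filter] at *
    refine ⟨Finset.mem_univ _, ?_⟩
    rw [walkSum_neg]
    omega
  · intro Y hY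
    rw [Finset.mem_filter] at *
    refine ⟨Finset.mem_univ _, ?_⟩
    rw [walkSum_neg]
    omega
  · intro Y _; funext i; simp
  · intro Y _; funext i; simp

/-- The compressed Chebyshev polynomial
`p_{s,D}(z) = E[T_{D_s}(z) · 1{|D_s| ≤ D}]`, as the uniform average over the
`2^s` sign patterns. -/
noncomputable def chebCompress (s D : ℕ) : Polynomial ℝ :=
  ((2 : ℝ) ^ s)⁻¹ • ∑ Y : Fin s → Bool,
    if |walkSum s Y| ≤ (D : ℤ) then Polynomial.Chebyshev.T ℝ (walkSum s Y) else 0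

/-- for all positive integers `s, D` and `z ∈ [-1,1]`,
`|p_{s,D}(z) - z^s| ≤ 2 exp(-D²/(2s))`. -/
theorem chebCompress_approx_pow (s D : ℕ) (hs : 0 < s) (hD : 0 < D)
    (z : ℝ) (hz : z ∈ Set.Icc (-1 : ℝ) 1) :
    |(chebCompress s D).eval z - z ^ s|
      ≤ 2 * Real.exp (-(D : ℝ) ^ 2 / (2 * s)) := by
  obtain ⟨hz1, hz2⟩ := hz
  set θ := Real.arccos z with hθ
  have hcos : Real.cos θ = z := Real.cos_arccos hz1 hz2
  -- evaluate the polynomial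
  have heval : (chebCompress s D).eval z
      = ((2:ℝ) ^ s)⁻¹ * ∑ Y : Fin s → Bool,
          (if |walkSum s Y| ≤ (D : ℤ) then Real.cos (walkSum s Y * θ) else 0) := by
    rw [chebCompress, Polynomial.eval_smul, smul_eq_mul]
    congr 1
    rw [Polynomial.eval_finset_sum]
    refine Finset.sum_congr rfl fun Y _ => ?_
    rw [apply_ite (Polynomial.eval z), Polynomial.eval_zero, ← hcos,
      Polynomial.Chebyshev.T_real_cos]
  -- the power identity
  have hpow : z ^ s = ((2:ℝ) ^ s)⁻¹ * ∑ Y : Fin s → Bool, Real.cos (walkSum s Y * θ) := by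
    rw [walk_cos, hcos, mul_pow]
    rw [← mul_assoc, inv_mul_cancel₀ (by positivity), one_mul]
  rw [heval, hpow, ← mul_sub, ← Finset.sum_sub_distrib]
  -- the difference is supported on the bad event
  set B := Finset.univ.filter fun Y : Fin s → Bool => ¬ (|walkSum s Y| ≤ (D : ℤ)) with hB
  have hsum : ∑ Y : Fin s → Bool,
      ((if |walkSum s Y| ≤ (D : ℤ) then Real.cos (walkSum s Y * θ) else 0)
        - Real.cos (walkSum s Y * θ))
      = ∑ Y ∈ B, (-Real.cos (walkSum s Y * θ)) := by
    rw [hB, Finset.sum_filter]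
    refine Finset.sum_congr rfl fun Y _ => ?_
    by_cases h : |walkSum s Y| ≤ (D : ℤ) <;> simp [h]
  rw [hsum, abs_mul, abs_inv, abs_pow, abs_two]
  have hbound : |∑ Y ∈ B, (-Real.cos (walkSum s Y * θ))| ≤ (B.card : ℝ) := by
    calc |∑ Y ∈ B, (-Real.cos (walkSum s Y * θ))|
        ≤ ∑ Y ∈ B, |(-Real.cos (walkSum s Y * θ))| := Finset.abs_sum_le_sum_abs _ _
      _ ≤ ∑ Y ∈ B, (1:ℝ) := by
          refine Finset.sum_le_sum fun Y _ => ?_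
          rw [abs_neg]
          exact Real.abs_cos_le_one _
      _ = (B.card : ℝ) := by simp
  have hcard : (B.card : ℝ) ≤ 2 * (2 ^ s * Real.exp (-(D : ℝ) ^ 2 / (2 * s))) := by
    have hsub : B ⊆ (Finset.univ.filter fun Y : Fin s → Bool => (D:ℤ) ≤ walkSum s Y)
        ∪ (Finset.univ.filter fun Y : Fin s → Bool => walkSum s Y ≤ -(D:ℤ)) := by
      intro Y hY
      rw [hB, Finset.mem_filter] at hY
      rw [Finset.mem_union, Finset.mem_filter, Finset.mem_filter]
      have := hY.2
      rcases abs_cases (walkSum s Y) with ⟨h1, h2⟩ | ⟨h1, h2⟩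
      · exact Or.inl ⟨Finset.mem_univ _, by omega⟩
      · exact Or.inr ⟨Finset.mem_univ _, by omega⟩
    have h1 : (B.card : ℝ)
        ≤ ((Finset.univ.filter fun Y : Fin s → Bool => (D:ℤ) ≤ walkSum s Y).card : ℝ)
          + ((Finset.univ.filter fun Y : Fin s → Bool => walkSum s Y ≤ -(D:ℤ)).card : ℝ) := by
      have := (Finset.card_le_card hsub).trans (Finset.card_union_le _ _)
      exact_mod_cast this
    rw [walk_count_neg] at h1
    have h2 := walk_count_ge s hs D
    linarith
  calc (2 ^ s : ℝ)⁻¹ * |∑ Y ∈ B, (-Real.cos (walkSum s Y * θ))|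
      ≤ (2 ^ s : ℝ)⁻¹ * (2 * (2 ^ s * Real.exp (-(D : ℝ) ^ 2 / (2 * s)))) := by
        apply mul_le_mul_of_nonneg_left (hbound.trans hcard) (by positivity)
    _ = 2 * Real.exp (-(D : ℝ) ^ 2 / (2 * s)) := by
        field_simp
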